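/- Let ρ : ℝ → ℝ be continuous, even, with compact support in (-1,1), and let φ : ℝ → ℝ be twice continuously differentiable with bounded second derivative. Then the 'complex correction cancellation' integral ∫_ℝ (1/ε²)[ρ((x-4ε)/ε)² + ρ((x+4ε)/ε)² - ρ((x-2ε)/ε)² - ρ((x+2ε)/ε)²] φ(x) dx tends to 0 as ε → 0⁺ (indeed it is O(ε)). -/

import Mathlib

/-!
After the substitution `x = ε u`, the integral becomes
`ε⁻¹ ∫ ρ(u)² [φ(εu + 4ε) + φ(εu - 4ε) - φ(εu + 2ε) - φ(εu - 2ε)] du`.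
The even part `τ ↦ φ(a + τ) + φ(a - τ)` has derivative bounded by `2Kτ` for `τ ≥ 0`, so the
bracket is at most `K ((4ε)² - (2ε)²) = 12 K ε²`, and the integral is `O(ε)`.
-/

open MeasureTheory Set Filter Topology

theorem abs_symm_sum_sub_symm_sum_le {φ φ' φ'' : ℝ → ℝ} {K : ℝ}
    (hφ : ∀ x, HasDerivAt φ (φ' x) x) (hφ' : ∀ x, HasDerivAt φ' (φ'' x) x)
    (hK : ∀ x, |φ'' x| ≤ K) (a : ℝ) {s t : ℝ} (ht : 0 ≤ t) (hts : t ≤ s) :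
    |φ (a + s) + φ (a - s) - (φ (a + t) + φ (a - t))| ≤ K * (s ^ 2 - t ^ 2) := by
  have lip : ∀ u v, |φ' u - φ' v| ≤ K * |u - v| := fun u v =>
    Convex.norm_image_sub_le_of_norm_hasDerivWithin_le (fun x _ => (hφ' x).hasDerivWithinAt)
      (fun x _ => hK x) convex_univ (mem_univ v) (mem_univ u)
  have hderiv : ∀ τ, HasDerivAt (fun τ => φ (a + τ) + φ (a - τ) - (φ (a + t) + φ (a - t)))
      (φ' (a + τ) - φ' (a - τ)) τ := fun τ => by
    have hp := (hφ (a + τ)).comp τ ((hasDerivAt_id τ).const_add a)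
    have hm := (hφ (a - τ)).comp τ ((hasDerivAt_id τ).const_sub a)
    simpa [Function.comp_def, sub_eq_add_neg] using (hp.add hm).sub_const (φ (a + t) + φ (a - t))
  refine image_norm_le_of_norm_deriv_right_le_deriv_boundary (a := t) (b := s)
    (B := fun τ => K * (τ ^ 2 - t ^ 2)) (B' := fun τ => K * (2 * τ))
    (fun τ _ => (hderiv τ).continuousAt.continuousWithinAt)
    (fun τ _ => (hderiv τ).hasDerivWithinAt) (by simp)
    (fun τ => by simpa using ((hasDerivAt_pow 2 τ).sub_const (t ^ 2)).const_mul K)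
    (fun τ hτ => ?_) ⟨hts, le_rfl⟩
  calc ‖φ' (a + τ) - φ' (a - τ)‖ ≤ K * |a + τ - (a - τ)| := lip _ _
    _ = K * (2 * τ) := by rw [add_sub_sub_cancel, ← two_mul, abs_of_nonneg (by linarith [hτ.1])]

theorem integral_comp_sub_mul (w ψ : ℝ → ℝ) (c : ℝ) :
    ∫ y, w (y - c) * ψ y = ∫ u, w u * ψ (u + c) := by
  simpa using integral_sub_right_eq_self (fun u => w u * ψ (u + c)) c

theorem integral_symm_translates_mul {w ψ : ℝ → ℝ} (hw : Continuous w)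
    (hwc : HasCompactSupport w) (hψ : Continuous ψ) (s t : ℝ) :
    ∫ y, (w (y - s) + w (y + s) - (w (y - t) + w (y + t))) * ψ y =
      ∫ u, w u * (ψ (u + s) + ψ (u - s) - (ψ (u + t) + ψ (u - t))) := by
  have hint : ∀ c, Integrable fun u => w u * ψ (u + c) := fun c =>
    (hw.mul (hψ.comp (continuous_add_const c))).integrable_of_hasCompactSupport hwc.mul_right
  have hint' : ∀ c, Integrable fun y => w (y - c) * ψ y := fun c => by
    simpa using (hint c).comp_sub_right c
  -- write every translate as `· - c`, the form `integral_comp_sub_mul` is stated in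
  have hψ' : ∀ u c, ψ (u - c) = ψ (u + -c) := fun u c => by rw [sub_eq_add_neg]
  have hw' : ∀ y c, w (y + c) = w (y - -c) := fun y c => by rw [sub_neg_eq_add]
  simp only [hw', hψ', add_mul, sub_mul, mul_add, mul_sub]
  rw [integral_sub, integral_sub, integral_add, integral_add, integral_add, integral_add]
  · simp only [integral_comp_sub_mul]
  all_goals first
    | exact hint _ | exact hint' _ | exact (hint _).add (hint _) | exact (hint' _).add (hint' _)

theorem abs_integral_symm_translates_rescaled_le {w φ φ' φ'' : ℝ → ℝ} {K : ℝ}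
    (hw : Continuous w) (hwc : HasCompactSupport w) (hw0 : ∀ y, 0 ≤ w y)
    (hφ : ∀ x, HasDerivAt φ (φ' x) x) (hφ' : ∀ x, HasDerivAt φ' (φ'' x) x)
    (hK : ∀ x, |φ'' x| ≤ K) {s t ε : ℝ} (ht : 0 ≤ t) (hts : t ≤ s) (hε : 0 < ε) :
    |∫ x, (1 / ε ^ 2) * (w ((x - s * ε) / ε) + w ((x + s * ε) / ε)
        - w ((x - t * ε) / ε) - w ((x + t * ε) / ε)) * φ x|
      ≤ K * (s ^ 2 - t ^ 2) * (∫ y, w y) * ε := by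
  have hφc : Continuous φ := continuous_iff_continuousAt.2 fun x => (hφ x).continuousAt
  set D : ℝ → ℝ := fun u =>
    φ (ε * (u + s)) + φ (ε * (u - s)) - (φ (ε * (u + t)) + φ (ε * (u - t)))
  have hrescale : ∫ x, (1 / ε ^ 2) * (w ((x - s * ε) / ε) + w ((x + s * ε) / ε)
        - w ((x - t * ε) / ε) - w ((x + t * ε) / ε)) * φ x
      = ε * (1 / ε ^ 2) * ∫ u, w u * D u := by
    set G : ℝ → ℝ := fun y =>
      (1 / ε ^ 2) * ((w (y - s) + w (y + s) - (w (y - t) + w (y + t))) * φ (ε * y))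
    have hpt : (fun x => (1 / ε ^ 2) * (w ((x - s * ε) / ε) + w ((x + s * ε) / ε)
        - w ((x - t * ε) / ε) - w ((x + t * ε) / ε)) * φ x)
        = fun x => G (x / ε) := funext fun x => by
      simp only [G, sub_div, add_div, mul_div_cancel_right₀ _ hε.ne', mul_div_cancel₀ _ hε.ne']
      ring
    rw [hpt, Measure.integral_comp_div G, abs_of_pos hε, smul_eq_mul, integral_const_mul,
      integral_symm_translates_mul (ψ := fun y => φ (ε * y)) hw hwc (by fun_prop), mul_assoc]
  have hD : ∀ u, |D u| ≤ K * ε ^ 2 * (s ^ 2 - t ^ 2) := fun u => by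
    have := abs_symm_sum_sub_symm_sum_le hφ hφ' hK (ε * u) (mul_nonneg hε.le ht)
      (mul_le_mul_of_nonneg_left hts hε.le)
    simp only [D, mul_add, mul_sub]
    convert this using 1; ring
  have hbound : |∫ u, w u * D u| ≤ K * ε ^ 2 * (s ^ 2 - t ^ 2) * ∫ y, w y := by
    rw [← integral_const_mul, ← Real.norm_eq_abs]
    refine norm_integral_le_of_norm_le
      ((hw.integrable_of_hasCompactSupport hwc).const_mul _) (Eventually.of_forall fun u => ?_)
    rw [Real.norm_eq_abs, abs_mul, abs_of_nonneg (hw0 u), mul_comm]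
    exact mul_le_mul_of_nonneg_right (hD u) (hw0 u)
  rw [hrescale, abs_mul, abs_of_pos (by positivity)]
  calc ε * (1 / ε ^ 2) * |∫ u, w u * D u|
      ≤ ε * (1 / ε ^ 2) * (K * ε ^ 2 * (s ^ 2 - t ^ 2) * ∫ y, w y) := by gcongr
    _ = K * (s ^ 2 - t ^ 2) * (∫ y, w y) * ε := by field_simp

theorem complex_correction_cancellation_general (ρ : ℝ → ℝ) (hρ : Continuous ρ)
    (hsupp : Function.support ρ ⊆ Set.Ioo (-1) 1)
    (φ : ℝ → ℝ) (hφ : ContDiff ℝ 2 φ)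
    (hbd : ∃ K, ∀ x, |deriv (deriv φ) x| ≤ K) :
    (∃ C > (0:ℝ), ∃ ε₀ > (0:ℝ), ∀ ε : ℝ, 0 < ε → ε < ε₀ →
      |∫ x, (1/ε^2) * ((ρ ((x - 4*ε)/ε))^2 + (ρ ((x + 4*ε)/ε))^2
        - (ρ ((x - 2*ε)/ε))^2 - (ρ ((x + 2*ε)/ε))^2) * φ x| ≤ C * ε) ∧
    Filter.Tendsto (fun ε : ℝ =>
      ∫ x, (1/ε^2) * ((ρ ((x - 4*ε)/ε))^2 + (ρ ((x + 4*ε)/ε))^2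
        - (ρ ((x - 2*ε)/ε))^2 - (ρ ((x + 2*ε)/ε))^2) * φ x)
      (nhdsWithin 0 (Set.Ioi 0)) (nhds 0) := by
  obtain ⟨K, hK⟩ := hbd
  have hK0 : 0 ≤ K := (abs_nonneg _).trans (hK 0)
  have hρc : HasCompactSupport ρ :=
    .of_support_subset_isCompact isCompact_Icc (hsupp.trans Ioo_subset_Icc_self)
  set M := ∫ y, ρ y ^ 2
  have hM0 : 0 ≤ M := integral_nonneg fun y => sq_nonneg _
  have hbound : ∀ ε : ℝ, 0 < ε →
      |∫ x, (1/ε^2) * ((ρ ((x - 4*ε)/ε))^2 + (ρ ((x + 4*ε)/ε))^2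
        - (ρ ((x - 2*ε)/ε))^2 - (ρ ((x + 2*ε)/ε))^2) * φ x| ≤ K * 12 * M * ε := fun ε hε => by
    refine (abs_integral_symm_translates_rescaled_le (w := fun y => ρ y ^ 2) (hρ.pow 2)
      (hρc.comp_left (g := fun z : ℝ => z ^ 2) (by norm_num)) (fun y => sq_nonneg _)
      (fun x => ((hφ.differentiable (by norm_num)) x).hasDerivAt)
      (fun x => (hφ.differentiable_deriv_two x).hasDerivAt) hK (s := 4) (t := 2)
      (by norm_num) (by norm_num) hε).trans_eq ?_
    norm_num [M]
  refine ⟨⟨K * 12 * M + 1, by positivity, 1, one_pos, fun ε hε _ => ?_⟩, ?_⟩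
  · exact (hbound ε hε).trans (by nlinarith)
  · have hlin : Tendsto (fun ε : ℝ => K * 12 * M * ε) (𝓝[>] 0) (𝓝 0) :=
      tendsto_nhdsWithin_of_tendsto_nhds
        (by simpa using (continuous_const_mul (K * 12 * M)).tendsto (0 : ℝ))
    refine squeeze_zero_norm' ?_ hlin
    filter_upwards [self_mem_nhdsWithin] with ε hε
    exact hbound ε hε

theorem complex_correction_cancellation (ρ : ℝ → ℝ) (hρ : Continuous ρ)
    (he : ∀ z, ρ (-z) = ρ z) (hsupp : Function.support ρ ⊆ Set.Ioo (-1) 1)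
    (φ : ℝ → ℝ) (hφ : ContDiff ℝ 2 φ)
    (hbd : ∃ K, ∀ x, |deriv (deriv φ) x| ≤ K) :
    (∃ C > (0:ℝ), ∃ ε₀ > (0:ℝ), ∀ ε : ℝ, 0 < ε → ε < ε₀ →
      |∫ x, (1/ε^2) * ((ρ ((x - 4*ε)/ε))^2 + (ρ ((x + 4*ε)/ε))^2
        - (ρ ((x - 2*ε)/ε))^2 - (ρ ((x + 2*ε)/ε))^2) * φ x| ≤ C * ε) ∧
    Filter.Tendsto (fun ε : ℝ =>
      ∫ x, (1/ε^2) * ((ρ ((x - 4*ε)/ε))^2 + (ρ ((x + 4*ε)/ε))^2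
        - (ρ ((x - 2*ε)/ε))^2 - (ρ ((x + 2*ε)/ε))^2) * φ x)
      (nhdsWithin 0 (Set.Ioi 0)) (nhds 0) :=
  complex_correction_cancellation_general ρ hρ hsupp φ hφ hbd
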